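/- arXiv:2308.09577 — 2 statements merged into one kernel-verified Lean document; each statement's English description precedes it below -/
import Mathlib

section
/- Let G be a finite group acting on a finite set M, let V be the rational permutation module with orthonormal basis M under the G-invariant bilinear form β, and let V₁ be the span of the sum of all basis vectors. Then V₁ and its orthogonal complement V₁^⊥ are G-invariant subspaces, and the determinant of the restriction of β to V₁^⊥ equals |M| modulo nonzero rational squares. -/
open Matrix

/-- Let `G` be a finite group acting on a finite set `M`, let
`V = M → ℚ` be the rational permutation module, with the `G`-invariant bilinear
form `β` making the standard basis (indexed by `M`) orthonormal, and let `V₁`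
be the span of the sum of all basis vectors (the constant function `1`).
Then `V₁` and its orthogonal complement `V₁^⊥` (with respect to `β`) are
`G`-invariant subspaces, and for any basis of `V₁^⊥` the Gram determinant of
the restriction of `β` to `V₁^⊥` equals `|M|` times a nonzero rational square. -/
theorem stmt0 (G : Type*) [Group G] [Finite G] (M : Type*) [Fintype M] [Nonempty M]
    [MulAction G M] [DecidableEq M]
    (β : LinearMap.BilinForm ℚ (M → ℚ))
    (hβ : ∀ f g : M → ℚ, β f g = ∑ m : M, f m * g m)
    (V₁ : Submodule ℚ (M → ℚ))
    (hV₁ : V₁ = Submodule.span ℚ {fun _ : M => (1 : ℚ)}) :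
    (∀ g : G, ∀ f ∈ V₁, (fun m => f (g⁻¹ • m)) ∈ V₁) ∧
    (∀ g : G, ∀ f ∈ LinearMap.BilinForm.orthogonal β V₁,
      (fun m => f (g⁻¹ • m)) ∈ LinearMap.BilinForm.orthogonal β V₁) ∧
    (∀ (ι : Type) (_ : Fintype ι) (_ : DecidableEq ι)
      (b : Module.Basis ι ℚ (LinearMap.BilinForm.orthogonal β V₁)),
      ∃ c : ℚ, c ≠ 0 ∧
        (Matrix.of fun i j : ι => β (b i : M → ℚ) (b j : M → ℚ)).det
          = (Fintype.card M : ℚ) * c ^ 2) := by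
  classical
  set v₀ : M → ℚ := fun _ => (1 : ℚ) with hv₀
  have hv₀mem : v₀ ∈ V₁ := by rw [hV₁]; exact Submodule.mem_span_singleton_self _
  have hcard : (Fintype.card M : ℚ) ≠ 0 := by
    exact_mod_cast Fintype.card_ne_zero
  -- characterization of V₁ membership
  have hmemV₁ : ∀ f, f ∈ V₁ ↔ ∃ a : ℚ, f = fun _ => a := by
    intro f
    rw [hV₁, Submodule.mem_span_singleton]
    constructor
    · rintro ⟨a, rfl⟩; exact ⟨a, by ext m; simp [v₀]⟩
    · rintro ⟨a, rfl⟩; exact ⟨a, by ext m; simp [v₀]⟩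
  -- characterization of orthogonal membership
  have hmemW : ∀ f, f ∈ LinearMap.BilinForm.orthogonal β V₁ ↔ ∑ m : M, f m = 0 := by
    intro f
    rw [LinearMap.BilinForm.mem_orthogonal_iff]
    constructor
    · intro h
      have := h v₀ hv₀mem
      simpa [LinearMap.BilinForm.IsOrtho, hβ, v₀] using this
    · intro h n hn
      obtain ⟨a, rfl⟩ := (hmemV₁ n).1 hn
      simp [LinearMap.BilinForm.IsOrtho, hβ, ← Finset.mul_sum, h]
  refine ⟨?_, ?_, ?_⟩
  · intro g f hf
    obtain ⟨a, rfl⟩ := (hmemV₁ f).1 hf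
    exact (hmemV₁ _).2 ⟨a, rfl⟩
  · intro g f hf
    rw [hmemW] at hf ⊢
    rw [← hf]
    exact Fintype.sum_equiv (MulAction.toPerm (g⁻¹ : G)) _ _ (fun m => rfl)
  · intro ι _ _
    set W := LinearMap.BilinForm.orthogonal β V₁ with hW
    intro b
    -- β is symmetric hence reflexive
    have hsymm : β.IsSymm := by
      rw [LinearMap.BilinForm.isSymm_def]
      intro x y; simp only [hβ]; exact Finset.sum_congr rfl (fun m _ => mul_comm _ _)
    have hrefl : β.IsRefl := hsymm.isRefl
    -- restriction of β to V₁ is nondegenerate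
    have hnd : (β.restrict V₁).Nondegenerate := by
      refine (LinearMap.IsRefl.nondegenerate_iff_separatingLeft (B := β.restrict V₁)
        (fun x y h => hrefl x y h)).2 ?_
      rintro ⟨x, hx⟩ h
      obtain ⟨a, rfl⟩ := (hmemV₁ x).1 hx
      have := h ⟨v₀, hv₀mem⟩
      simp only [LinearMap.BilinForm.restrict_apply, LinearMap.domRestrict_apply, hβ, v₀,
        mul_one] at this
      simp only [Finset.sum_const, nsmul_eq_mul, mul_comm] at this
      have ha : a = 0 := by
        rcases mul_eq_zero.1 this with h' | h'
        · exact h'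
        · exact absurd h' hcard
      subst ha; rfl
    have hc : IsCompl V₁ W :=
      LinearMap.BilinForm.isCompl_orthogonal_of_restrict_nondegenerate hrefl hnd
    -- basis of V₁
    have hli : LinearIndependent ℚ (fun _ : Unit => v₀) := by
      refine linearIndependent_unique_iff.2 ?_
      intro h
      have := congrFun h (Classical.arbitrary M)
      simp [v₀] at this
    have hspanrange : Submodule.span ℚ (Set.range fun _ : Unit => v₀) = V₁ := by
      rw [Set.range_const, hV₁]
    let bV₁ : Module.Basis Unit ℚ V₁ := (Module.Basis.span hli).map (LinearEquiv.ofEq _ _ hspanrange)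
    have hbV₁ : ∀ u : Unit, (bV₁ u : M → ℚ) = v₀ := by
      intro u
      simp only [bV₁, Module.Basis.map_apply, LinearEquiv.coe_ofEq_apply]
      exact congrArg Subtype.val (Module.Basis.span_apply hli u)
    -- big basis of M → ℚ
    let e : (V₁ × W) ≃ₗ[ℚ] (M → ℚ) := Submodule.prodEquivOfIsCompl V₁ W hc
    let B : Module.Basis (Unit ⊕ ι) ℚ (M → ℚ) := (bV₁.prod b).map e
    have hBinl : ∀ u, B (Sum.inl u) = v₀ := by
      intro u
      simp only [B, Module.Basis.map_apply, Module.Basis.prod_apply, Sum.elim_inl, Function.comp_apply, e,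
        Submodule.coe_prodEquivOfIsCompl, LinearMap.coprod_apply, LinearMap.inl_apply,
        Submodule.coe_subtype]
      simp [hbV₁ u]
    have hBinr : ∀ i, B (Sum.inr i) = (b i : M → ℚ) := by
      intro i
      simp only [B, Module.Basis.map_apply, Module.Basis.prod_apply, Sum.elim_inr, Function.comp_apply, e,
        Submodule.coe_prodEquivOfIsCompl, LinearMap.coprod_apply, LinearMap.inr_apply,
        Submodule.coe_subtype]
      simp
    -- Gram matrix wrt standard basis is 1
    have hstd : LinearMap.BilinForm.toMatrix (Pi.basisFun ℚ M) β = 1 := by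
      ext i j
      rw [LinearMap.BilinForm.toMatrix_apply]
      simp only [Pi.basisFun_apply, hβ]
      by_cases h : i = j
      · subst h
        simp [Pi.single_apply, Finset.sum_ite_eq']
      · rw [Matrix.one_apply_ne h]
        rw [Finset.sum_eq_zero]
        intro m _
        rcases eq_or_ne m i with rfl | hmi
        · simp [Pi.single_apply, Ne.symm h]
        · simp [Pi.single_apply, hmi]
    -- an equiv between index types (same cardinality)
    have hcardeq : Fintype.card (Unit ⊕ ι) = Fintype.card M := by
      have h1 : Fintype.card (Unit ⊕ ι) = Module.finrank ℚ (M → ℚ) :=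
        Module.finrank_eq_card_basis B |>.symm
      have h2 : Fintype.card M = Module.finrank ℚ (M → ℚ) :=
        Module.finrank_eq_card_basis (Pi.basisFun ℚ M) |>.symm
      rw [h1, h2]
    let σ : Unit ⊕ ι ≃ M := Fintype.equivOfCardEq hcardeq
    let S : Module.Basis (Unit ⊕ ι) ℚ (M → ℚ) := (Pi.basisFun ℚ M).reindex σ.symm
    have hS : LinearMap.BilinForm.toMatrix S β = 1 := by
      ext i j
      rw [LinearMap.BilinForm.toMatrix_apply]
      simp only [S, Module.Basis.reindex_apply, Equiv.symm_symm]
      have h12 : β (Pi.basisFun ℚ M (σ i)) (Pi.basisFun ℚ M (σ j))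
          = (1 : Matrix M M ℚ) (σ i) (σ j) := by
        rw [← LinearMap.BilinForm.toMatrix_apply (Pi.basisFun ℚ M) β, hstd]
      rw [h12]
      simp [Matrix.one_apply, σ.injective.eq_iff]
    set T : Matrix (Unit ⊕ ι) (Unit ⊕ ι) ℚ := S.toMatrix B with hT
    have hGram : Tᵀ * LinearMap.BilinForm.toMatrix S β * T = LinearMap.BilinForm.toMatrix B β :=
      LinearMap.BilinForm.toMatrix_mul_basis_toMatrix S B β
    rw [hS, Matrix.mul_one] at hGram
    have hdetT : T.det ≠ 0 := by
      have : IsUnit (S.det B) := S.isUnit_det B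
      rwa [Module.Basis.det_apply, isUnit_iff_ne_zero] at this
    have hdetGram : (LinearMap.BilinForm.toMatrix B β).det = T.det ^ 2 := by
      rw [← hGram, Matrix.det_mul, Matrix.det_transpose, sq]
    -- block structure
    set Gι : Matrix ι ι ℚ := Matrix.of fun i j : ι => β (b i : M → ℚ) (b j : M → ℚ) with hGι
    have horth : ∀ i : ι, β v₀ (b i : M → ℚ) = 0 := by
      intro i
      have : ∑ m : M, (b i : M → ℚ) m = 0 := (hmemW _).1 (b i).2
      simp [hβ, v₀, this]
    have hblock : LinearMap.BilinForm.toMatrix B β =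
        Matrix.fromBlocks (Matrix.of fun _ _ : Unit => (Fintype.card M : ℚ)) 0 0 Gι := by
      ext i j
      rcases i with u | i <;> rcases j with u' | j <;>
        rw [LinearMap.BilinForm.toMatrix_apply] <;>
        simp only [hBinl, hBinr]
      · simp [hβ, v₀, Matrix.fromBlocks, Finset.sum_const]
      · simp [horth j, Matrix.fromBlocks]
      · have h0 : β (b i : M → ℚ) v₀ = 0 := hrefl v₀ (b i : M → ℚ) (horth i)
        simp [h0, Matrix.fromBlocks]
      · simp [Matrix.fromBlocks, Gι]
    have hdetblock : (LinearMap.BilinForm.toMatrix B β).det = (Fintype.card M : ℚ) * Gι.det := by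
      rw [hblock, Matrix.det_fromBlocks_zero₂₁, Matrix.det_unique]
      rfl
    refine ⟨T.det / (Fintype.card M : ℚ), div_ne_zero hdetT hcard, ?_⟩
    have key : (Fintype.card M : ℚ) * Gι.det = T.det ^ 2 := by
      rw [← hdetblock, hdetGram]
    have : Gι.det = T.det ^ 2 / (Fintype.card M : ℚ) := by
      field_simp at key ⊢
      linarith [key]
    rw [this]
    field_simp
end

section
/- Let G be a finite group, H ≤ G, and χ an orthogonal character of G whose restriction to H is orthogonally stable. Then χ is orthogonally stable and det(χ) = det(Res_H^G χ) · (ℚ(χ)^×)². -/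
/-- `(V, ρ, β)` is an orthogonal representation of `G` over `K` affording the
character `χ`. -/
def IsOrthogonalRepOf (K : Type*) [Field K] (G : Type*) [Group G] (χ : G → K)
    (V : Type) [AddCommGroup V] [Module K V] (ρ : Representation K G V)
    (β : LinearMap.BilinForm K V) : Prop :=
  FiniteDimensional K V ∧
  (∀ g : G, LinearMap.trace K V (ρ g) = χ g) ∧
  (∀ v w : V, β v w = β w v) ∧
  (∀ (g : G) (v w : V), β (ρ g v) (ρ g w) = β v w) ∧
  β.Nondegenerate

/-- The Gram determinant of `β` with respect to every basis lies in the square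
class of `d`. -/
def GramDetClass (K : Type*) [Field K] (V : Type) [AddCommGroup V] [Module K V]
    (β : LinearMap.BilinForm K V) (d : K) : Prop :=
  ∀ (ι : Type) (_ : Fintype ι) (_ : DecidableEq ι) (b : Module.Basis ι K V),
    ∃ c : K, c ≠ 0 ∧ (Matrix.of fun i j : ι => β (b i) (b j)).det = d * c ^ 2

/-- `χ` is an orthogonal character of `G` over `K`. -/
def IsOrthogonalChar (K : Type*) [Field K] (G : Type*) [Group G] (χ : G → K) : Prop :=
  ∃ (V : Type) (_ : AddCommGroup V) (_ : Module K V) (ρ : Representation K G V)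
    (β : LinearMap.BilinForm K V), IsOrthogonalRepOf K G χ V ρ β

/-- `d` represents the orthogonal determinant of `χ`. -/
def IsOrthogonalDet (K : Type*) [Field K] (G : Type*) [Group G] (χ : G → K) (d : K) : Prop :=
  ∀ (V : Type) (_ : AddCommGroup V) (_ : Module K V) (ρ : Representation K G V)
    (β : LinearMap.BilinForm K V),
    IsOrthogonalRepOf K G χ V ρ β → GramDetClass K V β d

/-- `χ` is orthogonally stable: it is an orthogonal character and its
orthogonal determinant is well defined (a single nonzero square class). -/
def IsOrthogonallyStable (K : Type*) [Field K] (G : Type*) [Group G] (χ : G → K) : Prop :=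
  IsOrthogonalChar K G χ ∧ ∃ d : K, d ≠ 0 ∧ IsOrthogonalDet K G χ d

/-- Let `G` be a finite group, `H ≤ G`, and `χ` an orthogonal
character of `G` (with character field `K = ℚ(χ)`) whose restriction to `H` is
orthogonally stable. Then `χ` is orthogonally stable and
`det(χ) = det(Res_H^G χ)` modulo `(ℚ(χ)ˣ)²`. -/
theorem stmt17 (G : Type) [Group G] [Finite G] (H : Subgroup G)
    (K : Type) [Field K] [CharZero K] (χ : G → K)
    -- K is the character field ℚ(χ) of χ
    (hgen : IntermediateField.adjoin ℚ (Set.range χ) = ⊤)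
    (horth : IsOrthogonalChar K G χ)
    (hres : IsOrthogonallyStable K H (fun h : H => χ (h : G))) :
    IsOrthogonallyStable K G χ ∧
    ∀ d e : K, d ≠ 0 → e ≠ 0 →
      IsOrthogonalDet K H (fun h : H => χ (h : G)) d →
      IsOrthogonalDet K G χ e →
      ∃ c : K, c ≠ 0 ∧ e = d * c ^ 2 := by
  obtain ⟨-, d, hd, hdet⟩ := hres
  have key : ∀ (V : Type) (_ : AddCommGroup V) (_ : Module K V)
      (ρ : Representation K G V) (β : LinearMap.BilinForm K V),
      IsOrthogonalRepOf K G χ V ρ β →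
      IsOrthogonalRepOf K H (fun h : H => χ (h : G)) V (ρ.comp H.subtype) β := by
    rintro V _ _ ρ β ⟨h1, h2, h3, h4, h5⟩
    exact ⟨h1, fun h => h2 h, h3, fun h v w => h4 h v w, h5⟩
  refine ⟨⟨horth, d, hd, fun V _ _ ρ β hrep =>
    hdet V _ _ (ρ.comp H.subtype) β (key V _ _ ρ β hrep)⟩, ?_⟩
  rintro d' e hd' he hdres hdetG
  obtain ⟨V, _, _, ρ, β, hrep⟩ := horth
  have hfin : FiniteDimensional K V := hrep.1
  let b := Module.finBasis K V
  obtain ⟨c, hc, hcd⟩ := hdres V _ _ (ρ.comp H.subtype) β (key V _ _ ρ β hrep)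
    (Fin (Module.finrank K V)) inferInstance inferInstance b
  obtain ⟨c', hc', hce⟩ := hdetG V _ _ ρ β hrep (Fin (Module.finrank K V)) inferInstance inferInstance b
  refine ⟨c * c'⁻¹, by simp [hc, hc'], ?_⟩
  have h : d' * c ^ 2 = e * c' ^ 2 := by rw [← hcd, ← hce]
  field_simp
  linear_combination (-1 : K) * h
end
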